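/- arXiv:1910.12789 — 2 statements merged into one kernel-verified Lean document; each statement's English description precedes it below -/
import Mathlib

section
/- Let C be an [n_c, k_c]_q MDS code with codewords c_i indexed by i = 1,…,q^{k_c}, and let {|ψ_i⟩} be an orthonormal basis of (C^q)^{⊗n_q} with n_q = k_c such that each |ψ_i⟩ is r-uniform with r < k_c ≤ n_c/2. Then |φ⟩ = q^{-k_c/2} Σ_i |c_i⟩|ψ_i⟩ is an (r+1)-uniform state of n_c + n_q qudits. -/
/-!
For a set `S` of at most `r + 1` parties, split `S` into its classical part `S_L` and its
quantum part `S_R`. Since `|S_L| ≤ k_c ≤ n_c - k_c` is below the minimum distance, distinct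
codewords differ outside `S_L`, so all cross terms `c ≠ c'` vanish and the reduced matrix is
`∑_c (|c⟩⟨c| restricted to S_L) ⊗ ρ_{S_R}(ψ_c)`. If `|S_R| ≤ r`, every `ρ_{S_R}(ψ_c)` is the
same multiple of the identity, and since the code is MDS every pattern on the at most `k_c`
positions `S_L` is taken by equally many codewords. Otherwise `|S_R| = r + 1`, `S_L` is empty,
and `∑_c ρ_{S_R}(ψ_c)` is maximally mixed because `{ψ_c}` is an orthonormal basis.
-/

open scoped BigOperators

/-- A linear code `C ⊆ F^n` has minimum Hamming distance `d`. -/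
def hasMinDist {n F : Type*} [Fintype n] [Field F] [DecidableEq F]
    (C : Submodule F (n → F)) (d : ℕ) : Prop :=
  (∀ x ∈ C, x ≠ 0 → d ≤ hammingNorm x) ∧ ∃ x ∈ C, x ≠ 0 ∧ hammingNorm x = d

/-- Combine an assignment on `S` and on its complement into a full assignment. -/
def mergeOn {ι α : Type*} [DecidableEq ι] (S : Finset ι)
    (a : {i // i ∈ S} → α) (b : {i // i ∉ S} → α) : ι → α :=
  fun i => if h : i ∈ S then a ⟨i, h⟩ else b ⟨i, h⟩

/-- Reduced density matrix on the subset `S`, tracing out the complement. -/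
noncomputable def reducedMatrix {ι α : Type*} [Fintype ι] [DecidableEq ι]
    [Fintype α] [DecidableEq α] (ψ : (ι → α) → ℂ) (S : Finset ι) :
    Matrix ({i // i ∈ S} → α) ({i // i ∈ S} → α) ℂ :=
  fun x y => ∑ z : {i // i ∉ S} → α,
    ψ (mergeOn S x z) * (starRingEnd ℂ) (ψ (mergeOn S y z))

/-- `k`-uniform: every reduction to at most `k` parties is ∝ identity. -/
def kUniform {ι α : Type*} [Fintype ι] [DecidableEq ι] [Fintype α] [DecidableEq α]
    (ψ : (ι → α) → ℂ) (k : ℕ) : Prop :=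
  ∀ S : Finset ι, S.card ≤ k →
    ∃ c : ℂ, reducedMatrix ψ S = c • (1 : Matrix ({i // i ∈ S} → α) ({i // i ∈ S} → α) ℂ)

open Finset Matrix ComplexConjugate

section ReducedMatrix

variable {ι α : Type*} [DecidableEq ι]

@[simp]
lemma mergeOn_of_mem {S : Finset ι} (x : {i // i ∈ S} → α) (z : {i // i ∉ S} → α) {i : ι}
    (h : i ∈ S) : mergeOn S x z i = x ⟨i, h⟩ :=
  dif_pos h

@[simp]
lemma mergeOn_of_notMem {S : Finset ι} (x : {i // i ∈ S} → α) (z : {i // i ∉ S} → α) {i : ι}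
    (h : i ∉ S) : mergeOn S x z i = z ⟨i, h⟩ :=
  dif_neg h

lemma mergeOn_eq_iff {S : Finset ι} {x : {i // i ∈ S} → α} {z : {i // i ∉ S} → α}
    {w : ι → α} : mergeOn S x z = w ↔ S.restrict w = x ∧ (fun i : {i // i ∉ S} => w i) = z := by
  change (Equiv.piEquivPiSubtypeProd (· ∈ S) fun _ => α).symm (x, z) = w ↔ _
  rw [Equiv.symm_apply_eq, eq_comm]
  exact Prod.ext_iff

lemma mergeOn_left_inj {S : Finset ι} {x y : {i // i ∈ S} → α} (z : {i // i ∉ S} → α) :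
    mergeOn S x z = mergeOn S y z ↔ x = y :=
  ⟨fun h => funext fun i => by simpa using congrFun h i, fun h => h ▸ rfl⟩

variable [Fintype ι] [Fintype α]

lemma sum_mergeOn (S : Finset ι) (f : (ι → α) → ℂ) :
    ∑ x : {i // i ∈ S} → α, ∑ z : {i // i ∉ S} → α, f (mergeOn S x z) = ∑ w, f w := by
  rw [← Fintype.sum_prod_type']
  exact (Equiv.piEquivPiSubtypeProd (· ∈ S) fun _ => α).symm.sum_comp f

/-- The partial trace `Tr_{Sᶜ} |φ⟩⟨χ|`. -/
def reducedCross (φ χ : (ι → α) → ℂ) (S : Finset ι) :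
    Matrix ({i // i ∈ S} → α) ({i // i ∈ S} → α) ℂ :=
  fun x y => ∑ z : {i // i ∉ S} → α, φ (mergeOn S x z) * conj (χ (mergeOn S y z))

variable [DecidableEq α]

lemma trace_reducedMatrix (ψ : (ι → α) → ℂ) (S : Finset ι) :
    (reducedMatrix ψ S).trace = ∑ w, ψ w * conj (ψ w) :=
  sum_mergeOn S fun w => ψ w * conj (ψ w)

lemma kUniform.reducedMatrix_eq {ψ : (ι → α) → ℂ} {k : ℕ} (h : kUniform ψ k)
    (hψ : ∑ w, ψ w * conj (ψ w) = 1) {S : Finset ι} (hS : S.card ≤ k) :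
    reducedMatrix ψ S = ((Fintype.card α : ℂ) ^ S.card)⁻¹ • 1 := by
  obtain ⟨κ, hκ⟩ := h S hS
  have htrace := trace_reducedMatrix ψ S
  rw [hκ, hψ, trace_smul, trace_one, Fintype.card_fun, Fintype.card_coe, smul_eq_mul] at htrace
  push_cast at htrace
  rw [hκ, eq_inv_of_mul_eq_one_left htrace]

lemma reducedMatrix_const_mul (t : ℂ) (ψ : (ι → α) → ℂ) (S : Finset ι) :
    reducedMatrix (fun w => t * ψ w) S = (t * conj t) • reducedMatrix ψ S := by
  ext x y
  simp only [reducedMatrix, Matrix.smul_apply, smul_eq_mul, mul_sum, map_mul]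
  exact sum_congr rfl fun _ _ => by ring

lemma kUniform.const_mul {ψ : (ι → α) → ℂ} {k : ℕ} (h : kUniform ψ k) (t : ℂ) :
    kUniform (fun w => t * ψ w) k := fun S hS => by
  obtain ⟨κ, hκ⟩ := h S hS
  exact ⟨t * conj t * κ, by rw [reducedMatrix_const_mul, hκ, smul_smul]⟩

lemma reducedCross_self (ψ : (ι → α) → ℂ) (S : Finset ι) :
    reducedCross ψ ψ S = reducedMatrix ψ S :=
  rfl

lemma reducedMatrix_sum {I : Type*} [Fintype I] (φ : I → (ι → α) → ℂ) (S : Finset ι) :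
    reducedMatrix (fun w => ∑ c, φ c w) S = ∑ c, ∑ c', reducedCross (φ c) (φ c') S := by
  ext x y
  simp only [reducedMatrix, reducedCross, Matrix.sum_apply, map_sum, sum_mul_sum]
  rw [sum_comm]
  exact sum_congr rfl fun _ _ => sum_comm

lemma reducedCross_single_single_of_ne {S : Finset ι} {a b : ι → α} {i : ι} (hi : i ∉ S)
    (hab : a i ≠ b i) : reducedCross (Pi.single a 1) (Pi.single b 1) S = 0 := by
  ext x y
  refine sum_eq_zero fun z _ => ?_
  by_cases hx : mergeOn S x z = a
  · have hy : mergeOn S y z ≠ b := fun hy =>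
      hab (by rw [← hx, ← hy, mergeOn_of_notMem _ _ hi, mergeOn_of_notMem _ _ hi])
    simp [Pi.single_apply, hy]
  · simp [Pi.single_apply, hx]

lemma reducedCross_single_self_apply (S : Finset ι) (a : ι → α) (x y : {i // i ∈ S} → α) :
    reducedCross (Pi.single a 1) (Pi.single a 1) S x y =
      (if S.restrict a = x then 1 else 0) * (if S.restrict a = y then 1 else 0) := by
  simp only [reducedCross, Pi.single_apply, mergeOn_eq_iff]
  rcases eq_or_ne (S.restrict a) x with rfl | hx <;>
    rcases eq_or_ne (S.restrict a) y with rfl | hy <;> simp [*]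

lemma sum_reducedMatrix_of_sum_mul_conj {I : Type*} [Fintype I] {ψ : I → (ι → α) → ℂ}
    (h : ∀ u v, ∑ c, ψ c u * conj (ψ c v) = if u = v then 1 else 0) (S : Finset ι) :
    ∑ c, reducedMatrix (ψ c) S = (Fintype.card ({i // i ∉ S} → α) : ℂ) • 1 := by
  ext x y
  simp only [Matrix.sum_apply, reducedMatrix, Matrix.smul_apply, one_apply, smul_eq_mul]
  rw [sum_comm]
  simp [h, mergeOn_left_inj]

end ReducedMatrix

section Bipartite

variable {ι₁ ι₂ α : Type*}

def subtypeSumArrowEquiv {p : ι₁ ⊕ ι₂ → Prop} {p₁ : ι₁ → Prop} {p₂ : ι₂ → Prop}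
    (h₁ : ∀ a, p (.inl a) ↔ p₁ a) (h₂ : ∀ b, p (.inr b) ↔ p₂ b) :
    ({i // p i} → α) ≃ ({a // p₁ a} → α) × ({b // p₂ b} → α) :=
  (Equiv.arrowCongr (Equiv.subtypeSum.trans
    (Equiv.sumCongr (Equiv.subtypeEquivRight h₁) (Equiv.subtypeEquivRight h₂)))
    (Equiv.refl α)).trans (Equiv.sumArrowEquivProdArrow _ _ _)

variable [DecidableEq ι₁] [DecidableEq ι₂]

def splitMem (S : Finset (ι₁ ⊕ ι₂)) :
    ({i // i ∈ S} → α) ≃ ({a // a ∈ S.toLeft} → α) × ({b // b ∈ S.toRight} → α) :=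
  subtypeSumArrowEquiv (fun _ => mem_toLeft.symm) (fun _ => mem_toRight.symm)

def splitNotMem (S : Finset (ι₁ ⊕ ι₂)) :
    ({i // i ∉ S} → α) ≃ ({a // a ∉ S.toLeft} → α) × ({b // b ∉ S.toRight} → α) :=
  subtypeSumArrowEquiv (fun _ => not_congr mem_toLeft.symm) (fun _ => not_congr mem_toRight.symm)

lemma mergeOn_comp_inl (S : Finset (ι₁ ⊕ ι₂)) (x : {i // i ∈ S} → α) (z : {i // i ∉ S} → α) :
    mergeOn S x z ∘ Sum.inl = mergeOn S.toLeft (splitMem S x).1 (splitNotMem S z).1 := by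
  funext a
  by_cases h : Sum.inl a ∈ S
  · rw [Function.comp_apply, mergeOn_of_mem _ _ h, mergeOn_of_mem _ _ (mem_toLeft.2 h)]
    rfl
  · rw [Function.comp_apply, mergeOn_of_notMem _ _ h, mergeOn_of_notMem _ _ (mt mem_toLeft.1 h)]
    rfl

lemma mergeOn_comp_inr (S : Finset (ι₁ ⊕ ι₂)) (x : {i // i ∈ S} → α) (z : {i // i ∉ S} → α) :
    mergeOn S x z ∘ Sum.inr = mergeOn S.toRight (splitMem S x).2 (splitNotMem S z).2 := by
  funext b
  by_cases h : Sum.inr b ∈ S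
  · rw [Function.comp_apply, mergeOn_of_mem _ _ h, mergeOn_of_mem _ _ (mem_toRight.2 h)]
    rfl
  · rw [Function.comp_apply, mergeOn_of_notMem _ _ h, mergeOn_of_notMem _ _ (mt mem_toRight.1 h)]
    rfl

def tensorState (f : (ι₁ → α) → ℂ) (g : (ι₂ → α) → ℂ) : (ι₁ ⊕ ι₂ → α) → ℂ :=
  fun w => f (w ∘ Sum.inl) * g (w ∘ Sum.inr)

variable [Fintype ι₁] [Fintype ι₂] [Fintype α]

lemma reducedCross_tensorState (f f' : (ι₁ → α) → ℂ) (g g' : (ι₂ → α) → ℂ)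
    (S : Finset (ι₁ ⊕ ι₂)) (x y : {i // i ∈ S} → α) :
    reducedCross (tensorState f g) (tensorState f' g') S x y =
      reducedCross f f' S.toLeft (splitMem S x).1 (splitMem S y).1 *
        reducedCross g g' S.toRight (splitMem S x).2 (splitMem S y).2 := by
  simp only [reducedCross, tensorState, mergeOn_comp_inl, mergeOn_comp_inr, map_mul, sum_mul_sum]
  rw [← (splitNotMem S).symm.sum_comp, Fintype.sum_prod_type]
  simp only [Equiv.apply_symm_apply]
  exact sum_congr rfl fun _ _ => sum_congr rfl fun _ _ => by ring

end Bipartite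

section ClassicalQuantum

variable {ι₁ ι₂ α I : Type*} [Fintype ι₁] [DecidableEq ι₁] [Fintype ι₂] [DecidableEq ι₂]
  [Fintype α] [DecidableEq α] [Fintype I]

def cqState (a : I → ι₁ → α) (ψ : I → (ι₂ → α) → ℂ) : (ι₁ ⊕ ι₂ → α) → ℂ :=
  fun w => ∑ c, tensorState (Pi.single (a c) 1) (ψ c) w

lemma reducedMatrix_cqState_apply {a : I → ι₁ → α} (ψ : I → (ι₂ → α) → ℂ)
    {S : Finset (ι₁ ⊕ ι₂)} (ha : ∀ c c', c ≠ c' → ∃ i ∉ S.toLeft, a c i ≠ a c' i)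
    (x y : {i // i ∈ S} → α) :
    reducedMatrix (cqState a ψ) S x y =
      ∑ c, (if S.toLeft.restrict (a c) = (splitMem S x).1 then 1 else 0) *
        (if S.toLeft.restrict (a c) = (splitMem S y).1 then 1 else 0) *
        reducedMatrix (ψ c) S.toRight (splitMem S x).2 (splitMem S y).2 := by
  unfold cqState
  rw [reducedMatrix_sum (fun c => tensorState (Pi.single (a c) 1) (ψ c)),
    Matrix.sum_apply]
  refine sum_congr rfl fun c _ => ?_
  rw [Matrix.sum_apply, sum_eq_single c, reducedCross_tensorState, reducedCross_single_self_apply,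
    reducedCross_self]
  · intro c' _ hc'
    obtain ⟨i, hi, hne⟩ := ha c c' hc'.symm
    rw [reducedCross_tensorState, reducedCross_single_single_of_ne hi hne, Matrix.zero_apply,
      zero_mul]
  · exact fun h => absurd (mem_univ c) h

lemma reducedMatrix_cqState_of_uniform {a : I → ι₁ → α} {ψ : I → (ι₂ → α) → ℂ}
    {S : Finset (ι₁ ⊕ ι₂)} (ha : ∀ c c', c ≠ c' → ∃ i ∉ S.toLeft, a c i ≠ a c' i)
    {κ : ℂ} (hψ : ∀ c, reducedMatrix (ψ c) S.toRight = κ • 1)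
    {m : ℕ} (hm : ∀ u, #{c | S.toLeft.restrict (a c) = u} = m) :
    reducedMatrix (cqState a ψ) S = (m * κ) • 1 := by
  ext x y
  rw [reducedMatrix_cqState_apply ψ ha]
  simp only [hψ, Matrix.smul_apply, one_apply, smul_eq_mul]
  by_cases hxy : x = y
  · subst hxy
    simp only [↓reduceIte, mul_one]
    rw [← hm (splitMem S x).1, natCast_card_filter, Finset.sum_mul]
    refine sum_congr rfl fun c _ => ?_
    split_ifs <;> simp
  · have hxy' : splitMem S x ≠ splitMem S y := (splitMem S).injective.ne hxy
    rw [if_neg hxy, mul_zero]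
    refine sum_eq_zero fun c _ => ?_
    split_ifs with h₁ h₂ h₃
    · exact absurd (Prod.ext (h₁.symm.trans h₂) h₃) hxy'
    all_goals simp

lemma reducedMatrix_cqState_of_toLeft_eq_empty {a : I → ι₁ → α} {ψ : I → (ι₂ → α) → ℂ}
    {S : Finset (ι₁ ⊕ ι₂)} (hS : S.toLeft = ∅)
    (ha : ∀ c c', c ≠ c' → ∃ i ∉ S.toLeft, a c i ≠ a c' i)
    {κ : ℂ} (hψ : ∑ c, reducedMatrix (ψ c) S.toRight = κ • 1) :
    reducedMatrix (cqState a ψ) S = κ • 1 := by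
  have hL : ∀ u v : {i // i ∈ S.toLeft} → α, u = v :=
    fun u v => funext fun i => absurd i.2 (by simp [hS])
  ext x y
  have hxy : x = y ↔ (splitMem S x).2 = (splitMem S y).2 :=
    (splitMem S).injective.eq_iff.symm.trans (Prod.ext_iff.trans (and_iff_right (hL _ _)))
  simp only [reducedMatrix_cqState_apply ψ ha, if_pos (hL _ _), one_mul, ← Matrix.sum_apply, hψ,
    Matrix.smul_apply, one_apply, hxy]

end ClassicalQuantum

lemma sum_mul_conj_eq_of_orthonormal {I γ : Type*} [Fintype I] [DecidableEq I] [Fintype γ]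
    [DecidableEq γ] (hcard : Fintype.card I = Fintype.card γ) (ψ : I → γ → ℂ)
    (h : ∀ c c', ∑ x, conj (ψ c x) * ψ c' x = if c = c' then 1 else 0) (u v : γ) :
    ∑ c, ψ c u * conj (ψ c v) = if u = v then 1 else 0 := by
  let U : Matrix γ I ℂ := Matrix.of fun x c => ψ c x
  have hU : Uᴴ * U = 1 := by
    ext c c'
    simpa [U, Matrix.mul_apply, one_apply] using h c c'
  have hU' : U * Uᴴ = 1 := (mul_eq_one_comm_of_equiv (Fintype.equivOfCardEq hcard)).1 hU
  simpa [U, Matrix.mul_apply, one_apply] using congrFun (congrFun hU' u) v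

section LinearCode

variable {ι F : Type*} [Field F] {C : Submodule F (ι → F)}

def codeRestrict (C : Submodule F (ι → F)) (T : Finset ι) : C →ₗ[F] ({i // i ∈ T} → F) :=
  (LinearMap.funLeft F F Subtype.val).comp C.subtype

@[simp]
lemma codeRestrict_apply (T : Finset ι) (c : C) (i : {i // i ∈ T}) :
    codeRestrict C T c i = (c : ι → F) i :=
  rfl

variable [Fintype ι] [DecidableEq ι] [DecidableEq F]

lemma eq_of_eq_off_of_card_lt {d : ℕ} (hd : ∀ x ∈ C, x ≠ 0 → d ≤ hammingNorm x)
    {T : Finset ι} (hT : T.card < d) {c c' : ι → F} (hc : c ∈ C) (hc' : c' ∈ C)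
    (h : ∀ i ∉ T, c i = c' i) : c = c' := by
  by_contra hne
  have hle : hammingNorm (c - c') ≤ T.card :=
    card_le_card fun i hi => by
      by_contra hiT
      exact (mem_filter.1 hi).2 (sub_eq_zero.2 (h i hiT))
  exact (hd _ (sub_mem hc hc') (sub_ne_zero.2 hne)).not_gt (hle.trans_lt hT)

lemma codeRestrict_surjective {k d : ℕ} (hk : Module.finrank F C = k)
    (hd : ∀ x ∈ C, x ≠ 0 → d ≤ hammingNorm x) (hkd : Fintype.card ι - k < d)
    {T : Finset ι} (hT : T.card ≤ k) : Function.Surjective (codeRestrict C T) := by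
  have hkι : k ≤ Fintype.card ι := by
    simpa [hk] using Submodule.finrank_le C
  obtain ⟨T', hTT', -, hT'⟩ :=
    exists_subsuperset_card_eq (subset_univ T) hT (by simpa using hkι)
  have hinj : Function.Injective (codeRestrict C T') := by
    refine (injective_iff_map_eq_zero _).2 fun c hc => Subtype.ext ?_
    refine eq_of_eq_off_of_card_lt hd (T := T'ᶜ) (by simpa [card_compl, hT']) c.2 C.zero_mem
      fun i hi => ?_
    simpa using congrFun hc ⟨i, by simpa using hi⟩
  have hsurj := (LinearMap.injective_iff_surjective_of_finrank_eq_finrank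
    (by simp [hk, hT'])).1 hinj
  intro v
  obtain ⟨c, hc⟩ := hsurj fun i => if h : i.1 ∈ T then v ⟨i, h⟩ else 0
  exact ⟨c, funext fun i => by simpa [i.2] using congrFun hc ⟨i, hTT' i.2⟩⟩

lemma card_filter_restrict_comp_eq [Fintype F] [DecidablePred (· ∈ C)] {α : Type*}
    [DecidableEq α] {T : Finset ι} (hT : Function.Surjective (codeRestrict C T)) (e : F ≃ α)
    (u : {i // i ∈ T} → α) :
    #{c : C | T.restrict (e ∘ (c : ι → F)) = u} = #{c | codeRestrict C T c = 0} := by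
  rw [← AddMonoidHom.card_fiber_eq_of_mem_range (codeRestrict C T) (hT (e.symm ∘ u)) (hT 0)]
  congr 1
  ext c
  simp [funext_iff, Equiv.eq_symm_apply]

end LinearCode

theorem clq_method_general {F : Type*} [Field F] [Fintype F] [DecidableEq F]
    {nc kc r q : ℕ} (e : F ≃ Fin q)
    (C : Submodule F (Fin nc → F)) [DecidablePred (· ∈ C)]
    (hk : Module.finrank F C = kc) (hMDS : hasMinDist C (nc - kc + 1))
    (hr : r < kc) (hhalf : 2 * kc ≤ nc)
    (ψ : C → ((Fin kc → Fin q) → ℂ))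
    (hortho : ∀ c c' : C,
      (∑ x : Fin kc → Fin q, (starRingEnd ℂ) (ψ c x) * ψ c' x) = if c = c' then 1 else 0)
    (huni : ∀ c : C, kUniform (ψ c) r)
    (φ : ((Fin nc ⊕ Fin kc) → Fin q) → ℂ)
    (hφ : φ = fun x => ((Real.sqrt ((q : ℝ) ^ kc))⁻¹ : ℂ) *
      ∑ c : C, (if (∀ i : Fin nc, x (Sum.inl i) = e ((c : Fin nc → F) i)) then 1 else 0) *
        ψ c (fun i => x (Sum.inr i))) :
    kUniform φ (r + 1) := by
  suffices hcq : kUniform (cqState (fun c : C => e ∘ (c : Fin nc → F)) ψ) (r + 1) by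
    subst hφ
    convert hcq.const_mul _ using 3 with w
    refine sum_congr rfl fun c _ => ?_
    simp [tensorState, Pi.single_apply, funext_iff, Function.comp_def]
  intro S hS
  have hcard := S.card_toLeft_add_card_toRight
  obtain ⟨hd, -⟩ := hMDS
  have hsep : ∀ c c' : C, c ≠ c' →
      ∃ i ∉ S.toLeft, e ((c : Fin nc → F) i) ≠ e ((c' : Fin nc → F) i) := by
    intro c c' hne
    by_contra! h
    exact hne (Subtype.ext (eq_of_eq_off_of_card_lt hd (by omega) c.2 c'.2
      fun i hi => e.injective (h i hi)))
  by_cases hR : S.toRight.card ≤ r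
  · have hsurj := codeRestrict_surjective hk hd (by simp) (T := S.toLeft) (by omega)
    have hκ c := (huni c).reducedMatrix_eq (by simpa [mul_comm] using hortho c c) hR
    exact ⟨_, reducedMatrix_cqState_of_uniform hsep hκ (card_filter_restrict_comp_eq hsurj e)⟩
  · have hcardC : Fintype.card C = Fintype.card (Fin kc → Fin q) := by
      simp [Module.card_eq_pow_finrank (K := F) (V := C), hk, Fintype.card_congr e]
    exact ⟨_, reducedMatrix_cqState_of_toLeft_eq_empty (card_eq_zero.1 (by omega)) hsep
      (sum_reducedMatrix_of_sum_mul_conj (sum_mul_conj_eq_of_orthonormal hcardC ψ hortho) _)⟩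

/-- **Cl+Q method (Lemma 2)**: concatenating the codewords `c_i` of an
`[n_c, k_c]_q` MDS code with an orthonormal basis `{|ψ_i⟩}` of `(ℂ^q)^{⊗n_q}`
(`n_q = k_c`) whose members are all `r`-uniform, with `r < k_c ≤ n_c/2`,
the state `|φ⟩ = q^{-k_c/2} ∑_i |c_i⟩|ψ_i⟩` is an `(r+1)`-uniform state of
`n_c + n_q` qudits. -/
theorem clq_method {F : Type*} [Field F] [Fintype F] [DecidableEq F]
    {nc kc r q : ℕ} (hq : Fintype.card F = q) (e : F ≃ Fin q)
    (C : Submodule F (Fin nc → F)) [DecidablePred (· ∈ C)]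
    (hk : Module.finrank F C = kc) (hMDS : hasMinDist C (nc - kc + 1))
    (hr : r < kc) (hhalf : 2 * kc ≤ nc)
    (ψ : C → ((Fin kc → Fin q) → ℂ))
    (hortho : ∀ c c' : C,
      (∑ x : Fin kc → Fin q, (starRingEnd ℂ) (ψ c x) * ψ c' x) = if c = c' then 1 else 0)
    (huni : ∀ c : C, kUniform (ψ c) r)
    (φ : ((Fin nc ⊕ Fin kc) → Fin q) → ℂ)
    (hφ : φ = fun x => ((Real.sqrt ((q : ℝ) ^ kc))⁻¹ : ℂ) *
      ∑ c : C, (if (∀ i : Fin nc, x (Sum.inl i) = e ((c : Fin nc → F) i)) then 1 else 0) *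
        ψ c (fun i => x (Sum.inr i))) :
    kUniform φ (r + 1) :=
  clq_method_general e C hk hMDS hr hhalf ψ hortho huni φ hφ
end

section
/- For q an odd prime power and the Singleton array entries a_i = 1/(1-γ^i) with γ a primitive element of GF(q), every square submatrix of the ⌈q/2⌉×⌈q/2⌉ matrix A with entries A_{r,s} = a_{r+s-1} (setting a_0 = 1) taken from the Singleton array is nonsingular; hence G = [I | A] generates an MDS code [q+1, ⌈q/2⌉]_q. -/
open Polynomial Finset

section Cauchy

variable {F ι : Type*} [Field F] [Fintype ι] [DecidableEq ι]

/-- The numerator of `∑ j, c j / (1 - X * v j)` over the common denominator `∏ k, (1 - X * v k)`. -/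
noncomputable def cauchyNumerator (v c : ι → F) : F[X] :=
  ∑ j, C (c j) * ∏ k ∈ univ.erase j, (1 - X * C (v k))

theorem natDegree_cauchyNumerator_le (v c : ι → F) :
    (cauchyNumerator v c).natDegree ≤ Fintype.card ι - 1 := by
  refine natDegree_sum_le_of_forall_le _ _ fun j _ => (natDegree_C_mul_le _ _).trans ?_
  calc (∏ k ∈ univ.erase j, (1 - X * C (v k))).natDegree
      ≤ ∑ k ∈ univ.erase j, (1 - X * C (v k)).natDegree := natDegree_prod_le _ _
    _ ≤ ∑ _k ∈ univ.erase j, 1 := by gcongr; compute_degree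
    _ = Fintype.card ι - 1 := by simp [card_erase_of_mem]

theorem eval_cauchyNumerator (v c : ι → F) {x : F} (hx : ∀ k, 1 - x * v k ≠ 0) :
    (cauchyNumerator v c).eval x = (∑ j, c j * (1 - x * v j)⁻¹) * ∏ k, (1 - x * v k) := by
  simp only [cauchyNumerator, eval_finsetSum, eval_mul, eval_C, eval_prod, eval_sub, eval_one,
    eval_X, sum_mul]
  refine sum_congr rfl fun j _ => ?_
  rw [← mul_prod_erase univ _ (mem_univ j), mul_assoc, inv_mul_cancel_left₀ (hx j)]

theorem eval_inv_cauchyNumerator (v c : ι → F) {j : ι} (hj : v j ≠ 0) :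
    (cauchyNumerator v c).eval (v j)⁻¹ = c j * ∏ k ∈ univ.erase j, (1 - (v j)⁻¹ * v k) := by
  simp only [cauchyNumerator, eval_finsetSum, eval_mul, eval_C, eval_prod, eval_sub, eval_one,
    eval_X]
  refine sum_eq_single j (fun i _ hij => ?_) (by simp)
  rw [prod_eq_zero (mem_erase.mpr ⟨Ne.symm hij, mem_univ j⟩) (by simp [hj]), mul_zero]

theorem eq_zero_of_cauchyNumerator_eq_zero {v c : ι → F} (hv : Function.Injective v)
    (h : cauchyNumerator v c = 0) : c = 0 := by
  have hnz : ∀ j, v j ≠ 0 → c j = 0 := fun j hj => by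
    have hprod : ∏ k ∈ univ.erase j, (1 - (v j)⁻¹ * v k) ≠ 0 :=
      prod_ne_zero_iff.mpr fun k hk => sub_ne_zero.mpr fun h1 =>
        (ne_of_mem_erase hk) (hv ((inv_mul_eq_one₀ hj).mp h1.symm).symm)
    simpa [h, hprod] using eval_inv_cauchyNumerator v c hj
  funext j
  by_cases hj : v j = 0
  · -- at `X = 0` every product is `1`, and all terms but the `j`-th vanish
    have := congrArg (eval 0) h
    simp only [cauchyNumerator, eval_finsetSum, eval_mul, eval_C, eval_prod, eval_sub, eval_one,
      eval_X, zero_mul, sub_zero, prod_const_one, mul_one, eval_zero] at this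
    rwa [sum_eq_single j (fun k _ hkj => hnz k fun hk => hkj (hv (hk.trans hj.symm))) (by simp)]
      at this
  · exact hnz j hj

theorem det_cauchy_ne_zero {u v : ι → F} (hu : Function.Injective u) (hv : Function.Injective v)
    (h : ∀ i j, 1 - u i * v j ≠ 0) : (Matrix.of fun i j => (1 - u i * v j)⁻¹).det ≠ 0 := by
  intro hdet
  obtain ⟨c, hc, hmul⟩ := Matrix.exists_mulVec_eq_zero_iff.mpr hdet
  obtain ⟨j⟩ : Nonempty ι := by
    by_contra! hempty
    exact hc (Subsingleton.elim _ _)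
  refine hc (eq_zero_of_cauchyNumerator_eq_zero hv
    (eq_zero_of_natDegree_lt_card_of_eval_eq_zero _ hu (fun i => ?_) ?_))
  · have hrow : ∑ k, c k * (1 - u i * v k)⁻¹ = 0 := by
      simpa [Matrix.mulVec, dotProduct, mul_comm] using congrFun hmul i
    rw [eval_cauchyNumerator v c (h i), hrow, zero_mul]
  · have := Fintype.card_pos_iff.mpr ⟨j⟩
    have := natDegree_cauchyNumerator_le v c
    omega

end Cauchy

theorem hammingNorm_sum_elim {α β F : Type*} [Fintype α] [Fintype β] [Zero F] [DecidableEq F]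
    (f : α → F) (g : β → F) :
    hammingNorm (Sum.elim f g) = hammingNorm f + hammingNorm g := by
  classical
  rw [hammingNorm, ← card_toLeft_add_card_toRight]
  congr 2 <;> ext <;> simp

theorem hammingNorm_add_card_filter_eq_zero {α F : Type*} [Fintype α] [Zero F] [DecidableEq F]
    (f : α → F) : hammingNorm f + #{i | f i = 0} = Fintype.card α := by
  rw [add_comm, hammingNorm, card_filter_add_card_filter_not, card_univ]

namespace Matrix

variable {m n : Type*}

def IsSuperregular {R : Type*} [CommRing R] (A : Matrix m n R) : Prop :=
  ∀ (t : ℕ) (f : Fin t → m) (g : Fin t → n),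
    Function.Injective f → Function.Injective g → (A.submatrix f g).det ≠ 0

theorem IsSuperregular.apply_ne_zero {R : Type*} [CommRing R] {A : Matrix m n R}
    (hA : A.IsSuperregular) (i : m) (j : n) : A i j ≠ 0 := by
  simpa using hA 1 (fun _ => i) (fun _ => j) (Function.injective_of_subsingleton _)
    (Function.injective_of_subsingleton _)

theorem isSuperregular_cauchy {F : Type*} [Field F] {u : m → F} {v : n → F}
    (hu : Function.Injective u) (hv : Function.Injective v) (h : ∀ i j, 1 - u i * v j ≠ 0) :
    (of fun i j => (1 - u i * v j)⁻¹).IsSuperregular := fun _ _ _ hf hg =>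
  det_cauchy_ne_zero (hu.comp hf) (hv.comp hg) fun _ _ => h _ _

variable {F : Type*} [Fintype m] [Fintype n] [Field F] {A : Matrix m n F}

theorem IsSuperregular.card_filter_vecMul_eq_zero_lt [DecidableEq F] (hA : A.IsSuperregular)
    {c : m → F} (hc : c ≠ 0) : #{j | (c ᵥ* A) j = 0} < #{i | c i ≠ 0} := by
  set S : Finset m := {i | c i ≠ 0}
  by_contra! hle
  obtain ⟨T, hTzero, hTcard⟩ := exists_subset_card_eq hle
  let f : Fin #S → m := fun k => S.equivFin.symm k
  let g : Fin #S → n := fun k => (T.equivFinOfCardEq hTcard).symm k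
  refine hA _ f g (Subtype.val_injective.comp (Equiv.injective _))
    (Subtype.val_injective.comp (Equiv.injective _))
    (exists_vecMul_eq_zero_iff.mp ⟨c ∘ f, ?_, ?_⟩)
  · obtain ⟨i, hi⟩ := Function.ne_iff.mp hc
    intro h
    exact hi (by simpa [f] using congrFun h (S.equivFin ⟨i, by simpa [S] using hi⟩))
  · ext k
    calc ((c ∘ f) ᵥ* A.submatrix f g) k = ∑ i ∈ S, c i * A i (g k) := by
          simp only [vecMul, dotProduct, submatrix_apply, Function.comp_apply, f]
          rw [S.equivFin.symm.sum_comp (fun i => c i * A i (g k))]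
          exact S.sum_coe_sort fun i => c i * A i (g k)
      _ = (c ᵥ* A) (g k) := sum_filter_of_ne fun i _ h => left_ne_zero_of_mul h
      _ = 0 := (mem_filter.mp (hTzero (Subtype.property _))).2

theorem IsSuperregular.card_add_one_le_hammingNorm [DecidableEq m] [DecidableEq F]
    (hA : A.IsSuperregular) {c : m → F} (hc : c ≠ 0) :
    Fintype.card n + 1 ≤ hammingNorm (c ᵥ* fromCols (1 : Matrix m m F) A) := by
  rw [vecMul_fromCols, vecMul_one, hammingNorm_sum_elim]
  have hzeros := hA.card_filter_vecMul_eq_zero_lt hc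
  have hcount := hammingNorm_add_card_filter_eq_zero (c ᵥ* A)
  have hc' : hammingNorm c = #{i | c i ≠ 0} := rfl
  omega

theorem IsSuperregular.hasMinDist_range_fromCols_one [DecidableEq m] [DecidableEq F] [Nonempty m]
    (hA : A.IsSuperregular) :
    hasMinDist (LinearMap.range (fromCols (1 : Matrix m m F) A).vecMulLinear)
      (Fintype.card n + 1) := by
  refine ⟨?_, ?_⟩
  · rintro _ ⟨c, rfl⟩ hx
    exact hA.card_add_one_le_hammingNorm fun hc => hx (by simp [hc])
  · obtain ⟨i⟩ := ‹Nonempty m›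
    have hx : (fromCols (1 : Matrix m m F) A).vecMulLinear (Pi.single i 1) =
        Sum.elim (Pi.single i 1) (A.row i) := by
      rw [vecMulLinear_apply, vecMul_fromCols, vecMul_one, single_one_vecMul]
    refine ⟨_, ⟨Pi.single i 1, rfl⟩, ?_, ?_⟩ <;> rw [hx]
    · exact fun h => by simpa using congrFun h (.inl i)
    · have hrow : hammingNorm (A.row i) = Fintype.card n := by
        simp [hammingNorm, hA.apply_ne_zero]
      rw [hammingNorm_sum_elim, hrow, add_comm]
      simp [hammingNorm, Pi.single_apply, filter_eq']

end Matrix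

section SingletonArray

variable {F : Type*} [Field F] {γ : F}

theorem pow_injOn_Iio_of_pow_ne_one (hγ0 : γ ≠ 0) {N : ℕ}
    (hγ : ∀ k, 0 < k → k < N → γ ^ k ≠ 1) : Set.InjOn (γ ^ ·) (Set.Iio N) := by
  intro i hi j hj hij
  by_contra hne
  wlog hlt : i < j generalizing i j
  · exact this hj hi hij.symm (Ne.symm hne) (by omega)
  refine hγ (j - i) (by omega) (by simp only [Set.mem_Iio] at hi hj; omega) ?_
  refine mul_left_cancel₀ (pow_ne_zero i hγ0) ?_
  rw [← pow_add, Nat.add_sub_cancel' hlt.le, mul_one]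
  exact hij.symm

def borderPow (γ : F) (s : ℕ) : F := if s = 0 then 0 else γ ^ (s - 1)

theorem borderPow_injOn (hγ0 : γ ≠ 0) {N : ℕ} (hγ : ∀ k, 0 < k → k < N → γ ^ k ≠ 1) :
    Set.InjOn (borderPow γ) (Set.Iic N) := by
  intro r hr s hs h
  simp only [Set.mem_Iic] at hr hs
  unfold borderPow at h
  split_ifs at h with hr0 hs0 hs0
  · omega
  · exact absurd h.symm (pow_ne_zero _ hγ0)
  · exact absurd h (pow_ne_zero _ hγ0)
  · have := pow_injOn_Iio_of_pow_ne_one hγ0 hγ (by simp only [Set.mem_Iio]; omega)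
      (by simp only [Set.mem_Iio]; omega) h
    omega

theorem mul_borderPow_mul_borderPow (γ : F) {r s : ℕ} (hr : r ≠ 0) (hs : s ≠ 0) :
    γ * borderPow γ r * borderPow γ s = γ ^ (r + s - 1) := by
  rw [borderPow, borderPow, if_neg hr, if_neg hs, ← pow_succ', ← pow_add]
  congr 1
  omega

theorem one_sub_mul_borderPow_ne_zero {N : ℕ} (hγ : ∀ k, 0 < k → k < N → γ ^ k ≠ 1) {r s : ℕ}
    (hrs : r + s ≤ N) : 1 - γ * borderPow γ r * borderPow γ s ≠ 0 := by
  by_cases hr : r = 0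
  · simp [borderPow, hr]
  by_cases hs : s = 0
  · simp [borderPow, hs]
  rw [mul_borderPow_mul_borderPow γ hr hs, sub_ne_zero]
  exact (hγ _ (by omega) (by omega)).symm

theorem isSuperregular_singletonArray {m : ℕ} (hγ0 : γ ≠ 0)
    (hγ : ∀ k, 0 < k → k < 2 * m - 2 → γ ^ k ≠ 1)
    (a : ℕ → F) (ha : ∀ i : ℕ, 1 ≤ i → a i = (1 - γ ^ i)⁻¹) (A : Matrix (Fin m) (Fin m) F)
    (hA : ∀ r s : Fin m,
      A r s = if (r : ℕ) = 0 ∨ (s : ℕ) = 0 then 1 else a ((r : ℕ) + (s : ℕ) - 1)) :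
    A.IsSuperregular := by
  have hA_cauchy : A = .of fun r s => (1 - γ * borderPow γ r * borderPow γ s)⁻¹ := by
    ext r s
    rw [hA, Matrix.of_apply]
    split_ifs with h
    · rcases h with h | h <;> simp [borderPow, h]
    · rw [not_or] at h
      rw [mul_borderPow_mul_borderPow γ h.1 h.2, ha _ (by omega)]
  have hinj : Function.Injective fun r : Fin m => borderPow γ r := fun r s h =>
    Fin.ext (borderPow_injOn hγ0 hγ (by simp only [Set.mem_Iic]; omega)
      (by simp only [Set.mem_Iic]; omega) h)
  rw [hA_cauchy]
  exact Matrix.isSuperregular_cauchy ((mul_right_injective₀ hγ0).comp hinj) hinj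
    fun r s => one_sub_mul_borderPow_ne_zero hγ (by omega)

variable [Fintype F]

theorem ne_zero_of_forall_pow_eq (hF : 2 < Fintype.card F)
    (hγ : ∀ x : F, x ≠ 0 → ∃ j : ℕ, γ ^ j = x) : γ ≠ 0 := by
  classical
  rintro rfl
  obtain ⟨x, -, hx⟩ := exists_mem_notMem_of_card_lt_card (s := ({0, 1} : Finset F)) (t := univ)
    ((card_le_two).trans_lt hF)
  simp only [mem_insert, mem_singleton, not_or] at hx
  obtain ⟨j, hj⟩ := hγ x hx.1
  rcases j with _ | j <;> simp_all [eq_comm]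

theorem orderOf_eq_card_sub_one_of_forall_pow_eq (hγ0 : γ ≠ 0)
    (hγ : ∀ x : F, x ≠ 0 → ∃ j : ℕ, γ ^ j = x) : orderOf γ = Fintype.card F - 1 := by
  classical
  have hgen : ∀ x : Fˣ, x ∈ Subgroup.zpowers (Units.mk0 γ hγ0) := fun x => by
    obtain ⟨j, hj⟩ := hγ x x.ne_zero
    exact ⟨j, Units.ext (by simp [hj])⟩
  rw [← Units.val_mk0 hγ0, orderOf_units, orderOf_eq_card_of_forall_mem_zpowers hgen,
    Nat.card_eq_fintype_card, Fintype.card_units]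

end SingletonArray

theorem singleton_array_MDS_general {F : Type*} [Field F] [Fintype F] [DecidableEq F]
    {q : ℕ} (hq : Fintype.card F = q) (hodd : Odd q)
    (γ : F) (hγ : ∀ x : F, x ≠ 0 → ∃ j : ℕ, γ ^ j = x)
    (a : ℕ → F) (ha : ∀ i : ℕ, 1 ≤ i → a i = (1 - γ ^ i)⁻¹)
    (A : Matrix (Fin ((q + 1) / 2)) (Fin ((q + 1) / 2)) F)
    (hA : ∀ r s : Fin ((q + 1) / 2),
      A r s = if (r : ℕ) = 0 ∨ (s : ℕ) = 0 then 1 else a ((r : ℕ) + (s : ℕ) - 1)) :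
    (∀ (t : ℕ) (f : Fin t → Fin ((q + 1) / 2)) (g : Fin t → Fin ((q + 1) / 2)),
      Function.Injective f → Function.Injective g → (A.submatrix f g).det ≠ 0) ∧
    hasMinDist
      (LinearMap.range
        (Matrix.fromCols (1 : Matrix (Fin ((q + 1) / 2)) (Fin ((q + 1) / 2)) F) A).vecMulLinear)
      ((q + 1) / 2 + 1) := by
  have hq_odd : q % 2 = 1 := Nat.odd_iff.mp hodd
  have hq3 : 3 ≤ q := by have := hq ▸ Fintype.one_lt_card (α := F); omega
  have hγ0 : γ ≠ 0 := ne_zero_of_forall_pow_eq (by omega) hγ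
  have horder : orderOf γ = q - 1 := hq ▸ orderOf_eq_card_sub_one_of_forall_pow_eq hγ0 hγ
  have hA_super : A.IsSuperregular := isSuperregular_singletonArray hγ0
    (fun k hk hkq => pow_ne_one_of_lt_orderOf hk.ne' (by omega)) a ha A hA
  have : Nonempty (Fin ((q + 1) / 2)) := ⟨⟨0, by omega⟩⟩
  exact ⟨hA_super, by simpa using hA_super.hasMinDist_range_fromCols_one⟩

/-- **Singleton-array construction**: for `q` an odd prime power and `γ` a
primitive element of `GF(q)`, with `a_i = (1-γ^i)⁻¹` (and border entries `1`),
every square submatrix of the `⌈q/2⌉ × ⌈q/2⌉` matrix `A` taken from the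
Singleton array is nonsingular; hence `G = [I | A]` generates an MDS code
`[q+1, ⌈q/2⌉]_q`.  (Here `⌈q/2⌉ = (q+1)/2`.) -/
theorem singleton_array_MDS {F : Type*} [Field F] [Fintype F] [DecidableEq F]
    {q : ℕ} (hq : Fintype.card F = q) (hodd : Odd q)
    (γ : F) (hγ : ∀ x : F, x ≠ 0 → ∃ j : ℕ, γ ^ j = x)
    (a : ℕ → F) (ha0 : a 0 = 1) (ha : ∀ i : ℕ, 1 ≤ i → a i = (1 - γ ^ i)⁻¹)
    (A : Matrix (Fin ((q + 1) / 2)) (Fin ((q + 1) / 2)) F)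
    (hA : ∀ r s : Fin ((q + 1) / 2),
      A r s = if (r : ℕ) = 0 ∨ (s : ℕ) = 0 then 1 else a ((r : ℕ) + (s : ℕ) - 1)) :
    (∀ (t : ℕ) (f : Fin t → Fin ((q + 1) / 2)) (g : Fin t → Fin ((q + 1) / 2)),
      Function.Injective f → Function.Injective g → (A.submatrix f g).det ≠ 0) ∧
    hasMinDist
      (LinearMap.range
        (Matrix.fromCols (1 : Matrix (Fin ((q + 1) / 2)) (Fin ((q + 1) / 2)) F) A).vecMulLinear)
      ((q + 1) / 2 + 1) :=
  singleton_array_MDS_general hq hodd γ hγ a ha A hA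
end
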